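/- Consider the parametric NLP min_{z∈ℝⁿ} f(z;θ) s.t. g(z;θ)=0, h(z;θ)≤0 and suppose (z*,λ*,μ*) is a KKT point at θ̄ satisfying LICQ, SOSC and strict complementarity. Then there exists τ̄ > 0 such that for every fixed τ ∈ (0, τ̄) there is an open neighborhood U_τ of θ̄ and a continuously differentiable map θ ↦ (z(τ;θ), λ(τ;θ), μ(τ;θ)) on U_τ such that for every θ ∈ U_τ this triple satisfies the smoothed KKT system at parameter θ and barrier parameter τ (stationarity ∇_z f + ∇_z g λ + ∇_z h μ = 0, g(z;θ)=0, h(z;θ)<0, μ>0, −μᵢhᵢ(z;θ)=τ), is the unique such solution in a fixed neighborhood of (z(τ;θ̄),λ(τ;θ̄),μ(τ;θ̄)), and lim_{τ→0⁺} (z(τ;θ̄),λ(τ;θ̄),μ(τ;θ̄)) = (z*,λ*,μ*). -/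

import Mathlib

/-!
Treat the barrier parameter as part of the parameter and consider the residual
`Φ(τ, θ; z, λ, μ) = (∇_z L, g(z, θ), (-μᵢ hᵢ(z, θ) - τ)ᵢ)`, which vanishes at `(0, θ̄; z*, λ*, μ*)`.
Its derivative in `(z, λ, μ)` there is injective: complementarity splits the constraints into
inactive ones (`dμᵢ = 0`) and active ones (`∇hᵢ dz = 0`), so pairing the stationarity row with
`dz` leaves `dzᵀ ∇²L dz = 0`; SOSC gives `dz = 0`, and then LICQ kills `(dλ, dμ)`. By the implicit
function theorem the zeros of `Φ` near the KKT point form the graph of a `C¹` map `ψ(τ, θ)`.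
Strict complementarity keeps `hᵢ < 0 ∨ μᵢ > 0` near the KKT point, and for `τ > 0` the equation
`-μᵢ hᵢ = τ` upgrades this to `hᵢ < 0 < μᵢ`, so there the zeros of `Φ` are exactly the smoothed
KKT points. Freezing `τ` gives the differentiable branch in `θ`, and continuity of `ψ` at
`(0, θ̄)` gives the limit along the central path.
-/

open Filter Topology

theorem kkt_linearization_eq_zero {Z ι κ : Type*} [NormedAddCommGroup Z] [NormedSpace ℝ Z]
    [Fintype ι] [Fintype κ]
    {H : Z →L[ℝ] Z →L[ℝ] ℝ} {a : ι → Z →L[ℝ] ℝ} {c : κ → Z →L[ℝ] ℝ} {s μ : κ → ℝ}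
    (hcompl : ∀ i, μ i * s i = 0) (hstrict : ∀ i, s i = 0 → 0 < μ i)
    (hLICQ : LinearIndependent ℝ (Sum.elim a fun i : {i // s i = 0} => c i))
    (hSOSC : ∀ d, d ≠ 0 → (∀ j, a j d = 0) → (∀ i, s i = 0 → c i d = 0) → 0 < H d d)
    {dz : Z} {dl : ι → ℝ} {du : κ → ℝ}
    (h₁ : H dz + ∑ j, dl j • a j + ∑ i, du i • c i = 0) (h₂ : ∀ j, a j dz = 0)
    (h₃ : ∀ i, du i * s i + μ i * c i dz = 0) :
    dz = 0 ∧ dl = 0 ∧ du = 0 := by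
  classical
  have hinactive : ∀ i, s i ≠ 0 → du i = 0 := fun i hi => by
    have hμ : μ i = 0 := (mul_eq_zero.1 (hcompl i)).resolve_right hi
    simpa [hμ, hi] using h₃ i
  have hactive : ∀ i, s i = 0 → c i dz = 0 := fun i hi => by
    simpa [hi, (hstrict i hi).ne'] using h₃ i
  have hdz : dz = 0 := by
    by_contra hne
    have hcurv : H dz dz = 0 := by
      have hsum : ∑ i, du i * c i dz = 0 := Finset.sum_eq_zero fun i _ => by
        by_cases hi : s i = 0
        · simp [hactive i hi]
        · simp [hinactive i hi]
      simpa [h₂, hsum] using congrArg (fun T : Z →L[ℝ] ℝ => T dz) h₁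
    exact (hSOSC dz hne h₂ hactive).ne' hcurv
  subst hdz
  have hcomb : ∑ k, Sum.elim dl (fun i : {i // s i = 0} => du i) k •
      Sum.elim a (fun i : {i // s i = 0} => c i) k = 0 := by
    have hoff : ∑ i : {i // s i ≠ 0}, du i • c i = 0 :=
      Finset.sum_eq_zero fun i _ => by simp [hinactive i i.2]
    rw [Fintype.sum_sum_type, ← h₁, ← Fintype.sum_subtype_add_sum_subtype (fun i => s i = 0),
      hoff]
    simp
  have hzero := Fintype.linearIndependent_iff.1 hLICQ _ hcomb
  refine ⟨rfl, funext fun j => hzero (.inl j), funext fun i => ?_⟩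
  by_cases hi : s i = 0
  · exact hzero (.inr ⟨i, hi⟩)
  · exact hinactive i hi

theorem fderiv_fderiv_apply {𝕜 E F : Type*} [NontriviallyNormedField 𝕜]
    [NormedAddCommGroup E] [NormedSpace 𝕜 E] [NormedAddCommGroup F] [NormedSpace 𝕜 F]
    {u : E → F} {x : E} (hu : DifferentiableAt 𝕜 (fderiv 𝕜 u) x) (d e : E) :
    fderiv 𝕜 (fun z => fderiv 𝕜 u z d) x e = fderiv 𝕜 (fderiv 𝕜 u) x e d := by
  rw [fderiv_clm_apply hu (differentiableAt_const d)]
  simp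

theorem ContinuousLinearMap.isInvertible_of_injective_of_finrank_eq {𝕜 E F : Type*}
    [NontriviallyNormedField 𝕜] [CompleteSpace 𝕜]
    [NormedAddCommGroup E] [NormedSpace 𝕜 E] [FiniteDimensional 𝕜 E]
    [NormedAddCommGroup F] [NormedSpace 𝕜 F] [FiniteDimensional 𝕜 F] {T : E →L[𝕜] F}
    (hT : Function.Injective T) (hdim : Module.finrank 𝕜 E = Module.finrank 𝕜 F) :
    T.IsInvertible :=
  ⟨((T : E →ₗ[𝕜] F).linearEquivOfInjective hT hdim).toContinuousLinearEquiv, rfl⟩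

theorem finrank_strongDual {𝕜 : Type*} (E : Type*) [NontriviallyNormedField 𝕜]
    [CompleteSpace 𝕜] [NormedAddCommGroup E] [NormedSpace 𝕜 E] [FiniteDimensional 𝕜 E] :
    Module.finrank 𝕜 (StrongDual 𝕜 E) = Module.finrank 𝕜 E :=
  LinearMap.toContinuousLinearMap.finrank_eq.symm.trans Subspace.dual_finrank_eq

theorem exists_Ioo_eventually_of_eventually_nhds_prod {X : Type*} [TopologicalSpace X] {x : X}
    {Q : ℝ × X → Prop} (hQ : ∀ᶠ a in 𝓝 ((0 : ℝ), x), Q a) :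
    ∃ ε > 0, ∀ τ ∈ Set.Ioo 0 ε, ∀ᶠ y in 𝓝 x, Q (τ, y) := by
  rw [nhds_prod_eq, eventually_prod_iff] at hQ
  obtain ⟨pa, hpa, pb, hpb, hQ⟩ := hQ
  obtain ⟨ε, hε, hsub⟩ := mem_nhdsGT_iff_exists_Ioo_subset.1 (nhdsWithin_le_nhds hpa)
  exact ⟨ε, hε, fun τ hτ => hpb.mono fun y hy => hQ (hsub hτ) hy⟩

theorem neg_and_pos_of_neg_mul_eq_pos {s μ τ : ℝ} (hτ : 0 < τ) (hsμ : -(μ * s) = τ)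
    (h : s < 0 ∨ 0 < μ) : s < 0 ∧ 0 < μ := by
  rcases mul_neg_iff.1 (show μ * s < 0 by linarith) with ⟨hμ, hs⟩ | ⟨hμ, hs⟩
  · exact ⟨hs, hμ⟩
  · exact h.elim (fun h' => absurd hs h'.asymm) (fun h' => absurd hμ h'.asymm)

section SmoothedKKT

variable {Z P ι κ : Type*} [NormedAddCommGroup Z] [NormedSpace ℝ Z] [Fintype ι] [Fintype κ]
  (f : Z → P → ℝ) (g : Z → P → ι → ℝ) (h : Z → P → κ → ℝ)

noncomputable def lagrangian (θ : P) (l : ι → ℝ) (μ : κ → ℝ) (z : Z) : ℝ :=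
  f z θ + ∑ j, l j * g z θ j + ∑ i, μ i * h z θ i

noncomputable def lagrangianGrad (θ : P) (w : Z × (ι → ℝ) × (κ → ℝ)) : Z →L[ℝ] ℝ :=
  fderiv ℝ (f · θ) w.1 + ∑ j, w.2.1 j • fderiv ℝ (g · θ j) w.1
    + ∑ i, w.2.2 i • fderiv ℝ (h · θ i) w.1

def IsSmoothedKKTPoint (τ : ℝ) (θ : P) (w : Z × (ι → ℝ) × (κ → ℝ)) : Prop :=
  lagrangianGrad f g h θ w = 0 ∧ g w.1 θ = 0 ∧ (∀ i, h w.1 θ i < 0) ∧ (∀ i, 0 < w.2.2 i) ∧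
    ∀ i, -(w.2.2 i * h w.1 θ i) = τ

/-- The argument is `((τ, θ), (z, λ, μ))`: the barrier parameter `τ` sits next to `θ`, so that the
implicit function theorem can be applied at `τ = 0`. -/
noncomputable def smoothedKKTResidual (x : (ℝ × P) × Z × (ι → ℝ) × (κ → ℝ)) :
    (Z →L[ℝ] ℝ) × (ι → ℝ) × (κ → ℝ) :=
  (lagrangianGrad f g h x.1.2 x.2, g x.2.1 x.1.2, fun i => -(x.2.2.2 i * h x.2.1 x.1.2 i) - x.1.1)

variable {f g h}

theorem smoothedKKTResidual_eq_zero_iff {τ : ℝ} {θ : P} {w : Z × (ι → ℝ) × (κ → ℝ)} :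
    smoothedKKTResidual f g h ((τ, θ), w) = 0 ↔
      lagrangianGrad f g h θ w = 0 ∧ g w.1 θ = 0 ∧ ∀ i, -(w.2.2 i * h w.1 θ i) = τ := by
  simp [smoothedKKTResidual, Prod.ext_iff, funext_iff, sub_eq_zero]

theorem isSmoothedKKTPoint_iff_residual_eq_zero {τ : ℝ} {θ : P} {w : Z × (ι → ℝ) × (κ → ℝ)}
    (hτ : 0 < τ) (hsign : ∀ i, h w.1 θ i < 0 ∨ 0 < w.2.2 i) :
    IsSmoothedKKTPoint f g h τ θ w ↔ smoothedKKTResidual f g h ((τ, θ), w) = 0 := by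
  rw [smoothedKKTResidual_eq_zero_iff]
  refine ⟨fun ⟨hL, hg, _, _, hc⟩ => ⟨hL, hg, hc⟩, fun ⟨hL, hg, hc⟩ => ⟨hL, hg, ?_, ?_, hc⟩⟩
  · exact fun i => (neg_and_pos_of_neg_mul_eq_pos hτ (hc i) (hsign i)).1
  · exact fun i => (neg_and_pos_of_neg_mul_eq_pos hτ (hc i) (hsign i)).2

theorem fderiv_lagrangian {θ : P} (hf : Differentiable ℝ (f · θ))
    (hg : ∀ j, Differentiable ℝ (g · θ j)) (hh : ∀ i, Differentiable ℝ (h · θ i))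
    (l : ι → ℝ) (μ : κ → ℝ) :
    fderiv ℝ (lagrangian f g h θ l μ) = fun z => lagrangianGrad f g h θ (z, l, μ) := by
  funext z
  exact (((hf z).hasFDerivAt.add (HasFDerivAt.fun_sum fun j _ =>
    ((hg j z).hasFDerivAt.const_mul (l j)))).add (HasFDerivAt.fun_sum fun i _ =>
    ((hh i z).hasFDerivAt.const_mul (μ i)))).fderiv

theorem fderiv_lagrangianGrad_apply {θ : P} (hf : ContDiff ℝ 2 (f · θ))
    (hg : ∀ j, ContDiff ℝ 2 (g · θ j)) (hh : ∀ i, ContDiff ℝ 2 (h · θ i))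
    (w v : Z × (ι → ℝ) × (κ → ℝ)) :
    fderiv ℝ (lagrangianGrad f g h θ) w v =
      fderiv ℝ (fderiv ℝ (lagrangian f g h θ w.2.1 w.2.2)) w.1 v.1
        + ∑ j, v.2.1 j • fderiv ℝ (g · θ j) w.1 + ∑ i, v.2.2 i • fderiv ℝ (h · θ i) w.1 := by
  have hD : ∀ {u : Z → ℝ}, ContDiff ℝ 2 u → Differentiable ℝ (fderiv ℝ u) := fun hu =>
    (hu.fderiv_right (m := 1) le_rfl).differentiable one_ne_zero
  have hF := (hD hf w.1).hasFDerivAt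
  have hG := fun j => (hD (hg j) w.1).hasFDerivAt
  have hH := fun i => (hD (hh i) w.1).hasFDerivAt
  have hsmul : ∀ (c : Z × (ι → ℝ) × (κ → ℝ) → ℝ) (c' : (Z × (ι → ℝ) × (κ → ℝ)) →L[ℝ] ℝ)
      {u : Z → Z →L[ℝ] ℝ} {u'}, HasFDerivAt c c' w → HasFDerivAt u u' w.1 →
      HasFDerivAt (fun w => c w • u w.1) (c w • u'.comp (.fst ℝ _ _) + c'.smulRight (u w.1)) w :=
    fun c c' u u' hc hu => hc.smul (hu.comp w hasFDerivAt_fst)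
  have hl := fun j => (hasFDerivAt_apply (𝕜 := ℝ) (F' := fun _ : ι => ℝ) j w.2.1).comp w
    (hasFDerivAt_snd (𝕜 := ℝ) (p := w)).fst
  have hμ := fun i => (hasFDerivAt_apply (𝕜 := ℝ) (F' := fun _ : κ => ℝ) i w.2.2).comp w
    (hasFDerivAt_snd (𝕜 := ℝ) (p := w)).snd
  have hw : HasFDerivAt (lagrangianGrad f g h θ) _ w :=
    ((hF.comp w hasFDerivAt_fst).add (HasFDerivAt.fun_sum (u := Finset.univ) fun j _ =>
      hsmul _ _ (hl j) (hG j))).add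
      (HasFDerivAt.fun_sum (u := Finset.univ) fun i _ => hsmul _ _ (hμ i) (hH i))
  have hz : HasFDerivAt (fun z => lagrangianGrad f g h θ (z, w.2.1, w.2.2)) _ w.1 :=
    (hF.add (HasFDerivAt.fun_sum (u := Finset.univ) fun j _ => (hG j).const_smul (w.2.1 j))).add
      (HasFDerivAt.fun_sum (u := Finset.univ) fun i _ => (hH i).const_smul (w.2.2 i))
  rw [fderiv_lagrangian (hf.differentiable two_ne_zero) (fun j => (hg j).differentiable two_ne_zero)
    (fun i => (hh i).differentiable two_ne_zero), hw.fderiv, hz.fderiv]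
  simp [Finset.sum_add_distrib]
  abel

variable [NormedAddCommGroup P] [NormedSpace ℝ P]

theorem contDiff_lagrangianGrad (hf : ContDiff ℝ 2 fun x : Z × P => f x.1 x.2)
    (hg : ContDiff ℝ 2 fun x : Z × P => g x.1 x.2) (hh : ContDiff ℝ 2 fun x : Z × P => h x.1 x.2) :
    ContDiff ℝ 1 fun x : P × Z × (ι → ℝ) × (κ → ℝ) => lagrangianGrad f g h x.1 x.2 := by
  have hswap : ContDiff ℝ 2 fun y : (P × Z × (ι → ℝ) × (κ → ℝ)) × Z => (y.2, y.1.1) := by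
    fun_prop
  have hpartial : ∀ {u : Z × P → ℝ}, ContDiff ℝ 2 u →
      ContDiff ℝ 1 fun x : P × Z × (ι → ℝ) × (κ → ℝ) => fderiv ℝ (fun z => u (z, x.1)) x.2.1 :=
    fun hu => ContDiff.fderiv (hu.comp hswap) (by fun_prop) le_rfl
  refine ((hpartial hf).add (ContDiff.sum fun j _ => ?_)).add (ContDiff.sum fun i _ => ?_)
  · exact (by fun_prop : ContDiff ℝ 1 fun x : P × Z × (ι → ℝ) × (κ → ℝ) => x.2.2.1 j).smul
      (hpartial (contDiff_pi.1 hg j))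
  · exact (by fun_prop : ContDiff ℝ 1 fun x : P × Z × (ι → ℝ) × (κ → ℝ) => x.2.2.2 i).smul
      (hpartial (contDiff_pi.1 hh i))

theorem contDiff_smoothedKKTResidual (hf : ContDiff ℝ 2 fun x : Z × P => f x.1 x.2)
    (hg : ContDiff ℝ 2 fun x : Z × P => g x.1 x.2) (hh : ContDiff ℝ 2 fun x : Z × P => h x.1 x.2) :
    ContDiff ℝ 1 (smoothedKKTResidual f g h) := by
  have hzθ : ContDiff ℝ 2 fun x : (ℝ × P) × Z × (ι → ℝ) × (κ → ℝ) => (x.2.1, x.1.2) := by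
    fun_prop
  refine ((contDiff_lagrangianGrad hf hg hh).comp
    (by fun_prop : ContDiff ℝ 1 fun x : (ℝ × P) × Z × (ι → ℝ) × (κ → ℝ) => (x.1.2, x.2))).prodMk
    (((hg.comp hzθ).of_le one_le_two).prodMk (contDiff_pi.2 fun i => ?_))
  have hhi := ((contDiff_pi.1 hh i).comp hzθ).of_le one_le_two
  exact ((by fun_prop : ContDiff ℝ 1 fun x : (ℝ × P) × Z × (ι → ℝ) × (κ → ℝ) => x.2.2.2 i).mul
    hhi).neg.sub (by fun_prop)

theorem fderiv_smoothedKKTResidual_comp_inr_apply (hf : ContDiff ℝ 2 fun x : Z × P => f x.1 x.2)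
    (hg : ContDiff ℝ 2 fun x : Z × P => g x.1 x.2) (hh : ContDiff ℝ 2 fun x : Z × P => h x.1 x.2)
    (τ : ℝ) (θ : P) (w v : Z × (ι → ℝ) × (κ → ℝ)) :
    (fderiv ℝ (smoothedKKTResidual f g h) ((τ, θ), w) ∘L .inr ℝ _ _) v =
      (fderiv ℝ (lagrangianGrad f g h θ) w v, fun j => fderiv ℝ (g · θ j) w.1 v.1,
        fun i => -(v.2.2 i * h w.1 θ i + w.2.2 i * fderiv ℝ (h · θ i) w.1 v.1)) := by
  have hpartial : ∀ {u : Z × P → ℝ}, ContDiff ℝ 2 u → Differentiable ℝ fun z => u (z, θ) :=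
    fun hu => (hu.comp (contDiff_prodMk_left θ)).differentiable two_ne_zero
  have hΦ := (contDiff_smoothedKKTResidual hf hg hh).differentiable one_ne_zero ((τ, θ), w)
  rw [← (hΦ.hasFDerivAt.comp w (hasFDerivAt_prodMk_right (τ, θ) w)).fderiv]
  have hL : DifferentiableAt ℝ (lagrangianGrad f g h θ) w :=
    ((contDiff_lagrangianGrad hf hg hh).comp (contDiff_const.prodMk contDiff_id)).differentiable
      one_ne_zero w
  have hG : HasFDerivAt (fun w : Z × (ι → ℝ) × (κ → ℝ) => g w.1 θ) _ w := hasFDerivAt_pi.2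
    fun j => ((hpartial (contDiff_pi.1 hg j)) w.1).hasFDerivAt.comp w hasFDerivAt_fst
  have hH : HasFDerivAt (fun w : Z × (ι → ℝ) × (κ → ℝ) => fun i => -(w.2.2 i * h w.1 θ i) - τ)
      _ w := hasFDerivAt_pi.2 fun i =>
    (((hasFDerivAt_apply (𝕜 := ℝ) (F' := fun _ : κ => ℝ) i w.2.2).comp w
      (hasFDerivAt_snd (𝕜 := ℝ) (p := w)).snd).mul
      (((hpartial (contDiff_pi.1 hh i)) w.1).hasFDerivAt.comp w hasFDerivAt_fst)).neg.sub_const τ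
  change fderiv ℝ (fun w => (lagrangianGrad f g h θ w, g w.1 θ,
    fun i => -(w.2.2 i * h w.1 θ i) - τ)) w v = _
  rw [(hL.hasFDerivAt.prodMk (hG.prodMk hH)).fderiv]
  simp
  funext i
  ring

theorem isInvertible_fderiv_smoothedKKTResidual_comp_inr [FiniteDimensional ℝ Z]
    (hf : ContDiff ℝ 2 fun x : Z × P => f x.1 x.2)
    (hg : ContDiff ℝ 2 fun x : Z × P => g x.1 x.2) (hh : ContDiff ℝ 2 fun x : Z × P => h x.1 x.2)
    {τ : ℝ} {θ : P} {zs : Z} {lams : ι → ℝ} {mus : κ → ℝ}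
    (hcompl : ∀ i, mus i * h zs θ i = 0) (hstrict : ∀ i, h zs θ i = 0 → 0 < mus i)
    (hLICQ : LinearIndependent ℝ (Sum.elim (fun j => fderiv ℝ (g · θ j) zs)
      fun i : {i // h zs θ i = 0} => fderiv ℝ (h · θ i) zs))
    (hSOSC : ∀ d, d ≠ 0 → (∀ j, fderiv ℝ (g · θ j) zs d = 0) →
      (∀ i, h zs θ i = 0 → fderiv ℝ (h · θ i) zs d = 0) →
      0 < fderiv ℝ (fun z => fderiv ℝ (lagrangian f g h θ lams mus) z d) zs d) :
    (fderiv ℝ (smoothedKKTResidual f g h) ((τ, θ), (zs, lams, mus)) ∘L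
      .inr ℝ _ _).IsInvertible := by
  have hf' : ContDiff ℝ 2 (f · θ) := hf.comp (contDiff_prodMk_left θ)
  have hg' : ∀ j, ContDiff ℝ 2 (g · θ j) := fun j =>
    (contDiff_pi.1 hg j).comp (contDiff_prodMk_left θ)
  have hh' : ∀ i, ContDiff ℝ 2 (h · θ i) := fun i =>
    (contDiff_pi.1 hh i).comp (contDiff_prodMk_left θ)
  have hL : ContDiff ℝ 2 (lagrangian f g h θ lams mus) :=
    (hf'.add (ContDiff.sum fun j _ => contDiff_const.mul (hg' j))).add
      (ContDiff.sum fun i _ => contDiff_const.mul (hh' i))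
  have hHess : DifferentiableAt ℝ (fderiv ℝ (lagrangian f g h θ lams mus)) zs :=
    (hL.fderiv_right (m := 1) le_rfl).differentiable one_ne_zero zs
  refine ContinuousLinearMap.isInvertible_of_injective_of_finrank_eq
    ((injective_iff_map_eq_zero _).2 fun v hv => ?_) ?_
  · rw [fderiv_smoothedKKTResidual_comp_inr_apply hf hg hh,
      fderiv_lagrangianGrad_apply hf' hg' hh'] at hv
    simp only [Prod.mk_eq_zero, funext_iff, Pi.zero_apply, neg_eq_zero] at hv
    have hSOSC' : ∀ d, d ≠ 0 → (∀ j, fderiv ℝ (g · θ j) zs d = 0) →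
        (∀ i, h zs θ i = 0 → fderiv ℝ (h · θ i) zs d = 0) →
        0 < fderiv ℝ (fderiv ℝ (lagrangian f g h θ lams mus)) zs d d := fun d hd h₁ h₂ => by
      rw [← fderiv_fderiv_apply hHess]
      exact hSOSC d hd h₁ h₂
    obtain ⟨hdz, hdl, hdu⟩ := kkt_linearization_eq_zero
      (H := fderiv ℝ (fderiv ℝ (lagrangian f g h θ lams mus)) zs)
      (a := fun j => fderiv ℝ (g · θ j) zs) (c := fun i => fderiv ℝ (h · θ i) zs)
      (s := fun i => h zs θ i) hcompl hstrict hLICQ hSOSC' hv.1 hv.2.1 hv.2.2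
    exact Prod.ext hdz (Prod.ext hdl hdu)
  · simp [Module.finrank_prod, finrank_strongDual]

theorem exists_isOpen_smoothedKKT_graph [FiniteDimensional ℝ Z] [CompleteSpace P]
    (hf : ContDiff ℝ 2 fun x : Z × P => f x.1 x.2)
    (hg : ContDiff ℝ 2 fun x : Z × P => g x.1 x.2) (hh : ContDiff ℝ 2 fun x : Z × P => h x.1 x.2)
    {θ₀ : P} {zs : Z} {lams : ι → ℝ} {mus : κ → ℝ}
    (hstat : lagrangianGrad f g h θ₀ (zs, lams, mus) = 0) (hfeas_g : g zs θ₀ = 0)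
    (hfeas_h : ∀ i, h zs θ₀ i ≤ 0) (hcompl : ∀ i, mus i * h zs θ₀ i = 0)
    (hstrict : ∀ i, h zs θ₀ i = 0 → 0 < mus i)
    (hLICQ : LinearIndependent ℝ (Sum.elim (fun j => fderiv ℝ (g · θ₀ j) zs)
      fun i : {i // h zs θ₀ i = 0} => fderiv ℝ (h · θ₀ i) zs))
    (hSOSC : ∀ d, d ≠ 0 → (∀ j, fderiv ℝ (g · θ₀ j) zs d = 0) →
      (∀ i, h zs θ₀ i = 0 → fderiv ℝ (h · θ₀ i) zs d = 0) →
      0 < fderiv ℝ (fun z => fderiv ℝ (lagrangian f g h θ₀ lams mus) z d) zs d) :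
    ∃ ψ : ℝ × P → Z × (ι → ℝ) × (κ → ℝ), ψ (0, θ₀) = (zs, lams, mus) ∧ ContDiffAt ℝ 1 ψ (0, θ₀) ∧
      ∃ W, IsOpen W ∧ ((0, θ₀), (zs, lams, mus)) ∈ W ∧
        ∀ x ∈ W, 0 < x.1.1 → (IsSmoothedKKTPoint f g h x.1.1 x.1.2 x.2 ↔ x.2 = ψ x.1) := by
  have hΦ := (contDiff_smoothedKKTResidual hf hg hh).contDiffAt
    (x := (((0 : ℝ), θ₀), (zs, lams, mus)))
  have hinv := isInvertible_fderiv_smoothedKKTResidual_comp_inr hf hg hh (τ := 0) hcompl hstrict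
    hLICQ hSOSC
  have hzero : smoothedKKTResidual f g h (((0 : ℝ), θ₀), (zs, lams, mus)) = 0 :=
    smoothedKKTResidual_eq_zero_iff.2 ⟨hstat, hfeas_g, fun i => by simp [hcompl i]⟩
  obtain ⟨W, hW, hWo, huW⟩ :=
    eventually_nhds_iff.1 (hΦ.eventually_apply_eq_iff_implicitFunction one_ne_zero hinv)
  have hh_cont : ∀ i, Continuous fun x : (ℝ × P) × Z × (ι → ℝ) × (κ → ℝ) => h x.2.1 x.1.2 i :=
    fun i => (continuous_apply i).comp (hh.continuous.comp
      (by fun_prop : Continuous fun x : (ℝ × P) × Z × (ι → ℝ) × (κ → ℝ) => (x.2.1, x.1.2)))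
  have hsign : IsOpen
      {x : (ℝ × P) × Z × (ι → ℝ) × (κ → ℝ) | ∀ i, h x.2.1 x.1.2 i < 0 ∨ 0 < x.2.2.2 i} := by
    simp only [Set.ofPred_forall, Set.ofPred_or]
    exact isOpen_iInter_of_finite fun i =>
      (isOpen_lt (hh_cont i) continuous_const).union (isOpen_lt continuous_const (by fun_prop))
  refine ⟨hΦ.implicitFunction one_ne_zero hinv, hΦ.implicitFunction_apply_self one_ne_zero hinv,
    hΦ.contDiffAt_implicitFunction one_ne_zero hinv, W ∩ _, hWo.inter hsign,
    ⟨huW, fun i => (hfeas_h i).lt_or_eq.imp_right (hstrict i)⟩, ?_⟩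
  rintro ⟨⟨τ, θ⟩, w⟩ hx hτ
  rw [isSmoothedKKTPoint_iff_residual_eq_zero hτ hx.2, ← hzero, hW _ hx.1, eq_comm]

theorem exists_nhds_isSmoothedKKTPoint_slice {ψ : ℝ × P → Z × (ι → ℝ) × (κ → ℝ)}
    {W : Set ((ℝ × P) × Z × (ι → ℝ) × (κ → ℝ))} (hW : IsOpen W)
    (hgraph : ∀ x ∈ W, 0 < x.1.1 → (IsSmoothedKKTPoint f g h x.1.1 x.1.2 x.2 ↔ x.2 = ψ x.1))
    {τ : ℝ} (hτ : 0 < τ) {θ₀ : P}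
    (hgood : ∀ᶠ θ in 𝓝 θ₀, ContDiffAt ℝ 1 ψ (τ, θ) ∧ ((τ, θ), ψ (τ, θ)) ∈ W) :
    ∃ U ∈ 𝓝 θ₀, ContDiffOn ℝ 1 (fun θ => ψ (τ, θ)) U ∧
      (∀ θ ∈ U, IsSmoothedKKTPoint f g h τ θ (ψ (τ, θ))) ∧
      ∃ V ∈ 𝓝 (ψ (τ, θ₀)), ∀ θ ∈ U, ∀ w ∈ V, IsSmoothedKKTPoint f g h τ θ w → w = ψ (τ, θ) := by
  obtain ⟨U₀, hU₀, hgoodU⟩ := hgood.exists_mem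
  have hWτ : {p : P × Z × (ι → ℝ) × (κ → ℝ) | ((τ, p.1), p.2) ∈ W} ∈ 𝓝 (θ₀, ψ (τ, θ₀)) :=
    (hW.preimage (by fun_prop)).mem_nhds (hgoodU θ₀ (mem_of_mem_nhds hU₀)).2
  obtain ⟨U₁, hU₁, V, hV, hUV⟩ := mem_nhds_prod_iff.1 hWτ
  refine ⟨U₀ ∩ U₁, inter_mem hU₀ hU₁, fun θ hθ => ?_, fun θ hθ => ?_, V, hV,
    fun θ hθ w hw hkkt => (hgraph ((τ, θ), w) (hUV (Set.mk_mem_prod hθ.2 hw)) hτ).1 hkkt⟩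
  · exact ((hgoodU θ hθ.1).1.comp θ (contDiffAt_const.prodMk contDiffAt_id)).contDiffWithinAt
  · exact (hgraph _ (hgoodU θ hθ.1).2 hτ).2 rfl

end SmoothedKKT

theorem smoothed_kkt_parametric_solution_general
    {n p m q : ℕ}
    (f : (Fin n → ℝ) → (Fin p → ℝ) → ℝ)
    (g : (Fin n → ℝ) → (Fin p → ℝ) → Fin m → ℝ)
    (h : (Fin n → ℝ) → (Fin p → ℝ) → Fin q → ℝ)
    (hf : ContDiff ℝ 2 (fun x : (Fin n → ℝ) × (Fin p → ℝ) => f x.1 x.2))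
    (hg : ContDiff ℝ 2 (fun x : (Fin n → ℝ) × (Fin p → ℝ) => g x.1 x.2))
    (hh : ContDiff ℝ 2 (fun x : (Fin n → ℝ) × (Fin p → ℝ) => h x.1 x.2))
    (θbar : Fin p → ℝ) (zs : Fin n → ℝ) (lams : Fin m → ℝ) (mus : Fin q → ℝ)
    -- (z*, λ*, μ*) is a KKT point at θ̄:
    (hstat : fderiv ℝ (fun z => f z θbar) zs
        + ∑ j, lams j • fderiv ℝ (fun z => g z θbar j) zs
        + ∑ i, mus i • fderiv ℝ (fun z => h z θbar i) zs = 0)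
    (hfeas_g : g zs θbar = 0)
    (hfeas_h : ∀ i, h zs θbar i ≤ 0)
    (hcompl : ∀ i, mus i * h zs θbar i = 0)
    -- strict complementarity:
    (hstrict : ∀ i, h zs θbar i = 0 → 0 < mus i)
    -- LICQ:
    (hLICQ : LinearIndependent ℝ (Sum.elim
        (fun j : Fin m => fderiv ℝ (fun z => g z θbar j) zs)
        (fun i : {i : Fin q // h zs θbar i = 0} =>
          fderiv ℝ (fun z => h z θbar (i : Fin q)) zs)))
    -- SOSC:
    (hSOSC : ∀ d : Fin n → ℝ, d ≠ 0 →
        (∀ j, fderiv ℝ (fun z => g z θbar j) zs d = 0) →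
        (∀ i, h zs θbar i = 0 → fderiv ℝ (fun z => h z θbar i) zs d = 0) →
        0 < fderiv ℝ (fun z => fderiv ℝ (fun w =>
              f w θbar + ∑ j, lams j * g w θbar j + ∑ i, mus i * h w θbar i) z d) zs d) :
    ∃ τbar : ℝ, 0 < τbar ∧
      ∃ (zc : ℝ → (Fin p → ℝ) → (Fin n → ℝ))
        (lc : ℝ → (Fin p → ℝ) → (Fin m → ℝ))
        (mc : ℝ → (Fin p → ℝ) → (Fin q → ℝ)),
        (∀ τ ∈ Set.Ioo (0 : ℝ) τbar,
          ∃ U ∈ 𝓝 θbar,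
            ContDiffOn ℝ 1 (zc τ) U ∧ ContDiffOn ℝ 1 (lc τ) U ∧ ContDiffOn ℝ 1 (mc τ) U ∧
            (∀ θ ∈ U,
              (fderiv ℝ (fun z => f z θ) (zc τ θ)
                  + ∑ j, lc τ θ j • fderiv ℝ (fun z => g z θ j) (zc τ θ)
                  + ∑ i, mc τ θ i • fderiv ℝ (fun z => h z θ i) (zc τ θ) = 0) ∧
              g (zc τ θ) θ = 0 ∧
              (∀ i, h (zc τ θ) θ i < 0) ∧
              (∀ i, 0 < mc τ θ i) ∧
              (∀ i, -(mc τ θ i * h (zc τ θ) θ i) = τ)) ∧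
            ∃ V ∈ 𝓝 (zc τ θbar, lc τ θbar, mc τ θbar),
              ∀ θ ∈ U, ∀ w : (Fin n → ℝ) × (Fin m → ℝ) × (Fin q → ℝ), w ∈ V →
                ((fderiv ℝ (fun z => f z θ) w.1
                    + ∑ j, w.2.1 j • fderiv ℝ (fun z => g z θ j) w.1
                    + ∑ i, w.2.2 i • fderiv ℝ (fun z => h z θ i) w.1 = 0) ∧
                  g w.1 θ = 0 ∧
                  (∀ i, h w.1 θ i < 0) ∧
                  (∀ i, 0 < w.2.2 i) ∧
                  (∀ i, -(w.2.2 i * h w.1 θ i) = τ)) →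
                w = (zc τ θ, lc τ θ, mc τ θ)) ∧
        Tendsto (fun τ => (zc τ θbar, lc τ θbar, mc τ θbar)) (𝓝[>] (0 : ℝ))
          (𝓝 (zs, lams, mus)) := by
  obtain ⟨ψ, hψ₀, hψ, W, hW, huW, hgraph⟩ := exists_isOpen_smoothedKKT_graph hf hg hh hstat
    hfeas_g hfeas_h hcompl hstrict hLICQ hSOSC
  have hgood : ∀ᶠ a in 𝓝 ((0 : ℝ), θbar), ContDiffAt ℝ 1 ψ a ∧ (a, ψ a) ∈ W :=
    (hψ.eventually (by simp)).and ((continuousAt_id.prodMk hψ.continuousAt).preimage_mem_nhds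
      (hW.mem_nhds (by rwa [hψ₀])))
  obtain ⟨τbar, hτbar, hslice⟩ := exists_Ioo_eventually_of_eventually_nhds_prod hgood
  refine ⟨τbar, hτbar, fun τ θ => (ψ (τ, θ)).1, fun τ θ => (ψ (τ, θ)).2.1,
    fun τ θ => (ψ (τ, θ)).2.2, fun τ hτ => ?_, ?_⟩
  · obtain ⟨U, hU, hψU, hkkt, V, hV, huniq⟩ :=
      exists_nhds_isSmoothedKKTPoint_slice hW hgraph hτ.1 (hslice τ hτ)
    exact ⟨U, hU, contDiff_fst.comp_contDiffOn hψU, contDiff_snd.fst.comp_contDiffOn hψU,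
      contDiff_snd.snd.comp_contDiffOn hψU, hkkt, V, hV, huniq⟩
  · have hcont : ContinuousAt (fun τ : ℝ => ψ (τ, θbar)) 0 :=
      hψ.continuousAt.comp (f := fun τ : ℝ => (τ, θbar)) (by fun_prop)
    rw [ContinuousAt, hψ₀] at hcont
    exact hcont.mono_left nhdsWithin_le_nhds

/-- **Theorem 3, point 2 (differentiable parametric solution of the smoothed KKT system).**
If `(z*, λ*, μ*)` is a KKT point at `θ̄` satisfying LICQ, SOSC and strict
complementarity, then there is `τ̄ > 0` such that for every fixed `τ ∈ (0, τ̄)` there are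
a neighborhood `U` of `θ̄` and a continuously differentiable map
`θ ↦ (z(τ;θ), λ(τ;θ), μ(τ;θ))` on `U` solving the smoothed KKT system at parameter `θ`
and barrier parameter `τ`, locally unique near `(z(τ;θ̄), λ(τ;θ̄), μ(τ;θ̄))`, and
`(z(τ;θ̄), λ(τ;θ̄), μ(τ;θ̄)) → (z*, λ*, μ*)` as `τ → 0⁺`. -/
theorem smoothed_kkt_parametric_solution
    {n p m q : ℕ}
    (f : (Fin n → ℝ) → (Fin p → ℝ) → ℝ)
    (g : (Fin n → ℝ) → (Fin p → ℝ) → Fin m → ℝ)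
    (h : (Fin n → ℝ) → (Fin p → ℝ) → Fin q → ℝ)
    (hf : ContDiff ℝ 2 (fun x : (Fin n → ℝ) × (Fin p → ℝ) => f x.1 x.2))
    (hg : ContDiff ℝ 2 (fun x : (Fin n → ℝ) × (Fin p → ℝ) => g x.1 x.2))
    (hh : ContDiff ℝ 2 (fun x : (Fin n → ℝ) × (Fin p → ℝ) => h x.1 x.2))
    (θbar : Fin p → ℝ) (zs : Fin n → ℝ) (lams : Fin m → ℝ) (mus : Fin q → ℝ)
    -- (z*, λ*, μ*) is a KKT point at θ̄:
    (hstat : fderiv ℝ (fun z => f z θbar) zs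
        + ∑ j, lams j • fderiv ℝ (fun z => g z θbar j) zs
        + ∑ i, mus i • fderiv ℝ (fun z => h z θbar i) zs = 0)
    (hfeas_g : g zs θbar = 0)
    (hfeas_h : ∀ i, h zs θbar i ≤ 0)
    (hmu_nonneg : ∀ i, 0 ≤ mus i)
    (hcompl : ∀ i, mus i * h zs θbar i = 0)
    -- strict complementarity:
    (hstrict : ∀ i, h zs θbar i = 0 → 0 < mus i)
    -- LICQ:
    (hLICQ : LinearIndependent ℝ (Sum.elim
        (fun j : Fin m => fderiv ℝ (fun z => g z θbar j) zs)
        (fun i : {i : Fin q // h zs θbar i = 0} =>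
          fderiv ℝ (fun z => h z θbar (i : Fin q)) zs)))
    -- SOSC:
    (hSOSC : ∀ d : Fin n → ℝ, d ≠ 0 →
        (∀ j, fderiv ℝ (fun z => g z θbar j) zs d = 0) →
        (∀ i, h zs θbar i = 0 → fderiv ℝ (fun z => h z θbar i) zs d = 0) →
        0 < fderiv ℝ (fun z => fderiv ℝ (fun w =>
              f w θbar + ∑ j, lams j * g w θbar j + ∑ i, mus i * h w θbar i) z d) zs d) :
    ∃ τbar : ℝ, 0 < τbar ∧
      ∃ (zc : ℝ → (Fin p → ℝ) → (Fin n → ℝ))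
        (lc : ℝ → (Fin p → ℝ) → (Fin m → ℝ))
        (mc : ℝ → (Fin p → ℝ) → (Fin q → ℝ)),
        (∀ τ ∈ Set.Ioo (0 : ℝ) τbar,
          ∃ U ∈ 𝓝 θbar,
            ContDiffOn ℝ 1 (zc τ) U ∧ ContDiffOn ℝ 1 (lc τ) U ∧ ContDiffOn ℝ 1 (mc τ) U ∧
            (∀ θ ∈ U,
              (fderiv ℝ (fun z => f z θ) (zc τ θ)
                  + ∑ j, lc τ θ j • fderiv ℝ (fun z => g z θ j) (zc τ θ)
                  + ∑ i, mc τ θ i • fderiv ℝ (fun z => h z θ i) (zc τ θ) = 0) ∧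
              g (zc τ θ) θ = 0 ∧
              (∀ i, h (zc τ θ) θ i < 0) ∧
              (∀ i, 0 < mc τ θ i) ∧
              (∀ i, -(mc τ θ i * h (zc τ θ) θ i) = τ)) ∧
            ∃ V ∈ 𝓝 (zc τ θbar, lc τ θbar, mc τ θbar),
              ∀ θ ∈ U, ∀ w : (Fin n → ℝ) × (Fin m → ℝ) × (Fin q → ℝ), w ∈ V →
                ((fderiv ℝ (fun z => f z θ) w.1
                    + ∑ j, w.2.1 j • fderiv ℝ (fun z => g z θ j) w.1
                    + ∑ i, w.2.2 i • fderiv ℝ (fun z => h z θ i) w.1 = 0) ∧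
                  g w.1 θ = 0 ∧
                  (∀ i, h w.1 θ i < 0) ∧
                  (∀ i, 0 < w.2.2 i) ∧
                  (∀ i, -(w.2.2 i * h w.1 θ i) = τ)) →
                w = (zc τ θ, lc τ θ, mc τ θ)) ∧
        Tendsto (fun τ => (zc τ θbar, lc τ θbar, mc τ θbar)) (𝓝[>] (0 : ℝ))
          (𝓝 (zs, lams, mus)) :=
  smoothed_kkt_parametric_solution_general f g h hf hg hh θbar zs lams mus hstat hfeas_g hfeas_h
    hcompl hstrict hLICQ hSOSC
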